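/- arXiv:2407.03242 — 2 statements merged into one kernel-verified Lean document; each statement's English description precedes it below -/
import Mathlib

section
/- With S_{IJ} = sqrt(2/(k+2)) sin(π(2I+1)(2J+1)/(k+2)) for half-integers I,J,L ∈ {0, 1/2, ..., k/2}, N = sqrt(2/(k+2))·sin(π/(k+2)) and d_L defined by N d_L = S_{0L}, the Verlinde-type identity holds: Σ_{K=|I-J|}^{u(I,J)} S_{KL} = S_{JL} S_{IL} / S_{0L}, where u(I,J) = min(I+J, k-I-J) and the sum over K proceeds in integer steps. -/
private lemma tele_aux (θ : ℝ) (d : ℝ) (m : ℕ) :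
    ∑ t ∈ Finset.range (m + 1), 2 * Real.sin θ * Real.sin ((d + 2 * t + 1) * θ)
      = Real.cos (d * θ) - Real.cos ((d + 2 * m + 2) * θ) := by
  have key : ∀ x : ℝ, 2 * Real.sin θ * Real.sin ((x + 1) * θ)
      = Real.cos (x * θ) - Real.cos ((x + 2) * θ) := by
    intro x
    rw [Real.cos_sub_cos,
      show (x * θ + (x + 2) * θ) / 2 = (x + 1) * θ by ring,
      show (x * θ - (x + 2) * θ) / 2 = -θ by ring, Real.sin_neg]
    ring
  induction m with
  | zero =>
    have h := key d
    simpa using h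
  | succ m ih =>
    rw [Finset.sum_range_succ, ih]
    have h := key (d + 2 * m + 2)
    push_cast
    rw [show d + 2 * ((m : ℝ) + 1) + 1 = (d + 2 * m + 2) + 1 by ring, h]
    ring_nf

/-- With labels doubled (`a = 2I`, `b = 2J`, `l = 2L` in `0,…,k`) and the modular
S-matrix `S x y = sqrt(2/(k+2)) sin(π(x+1)(y+1)/(k+2))` of su(2) level k, the Verlinde-type
identity `Σ_{K=|I-J|}^{u(I,J)} S_{KL} = S_{JL} S_{IL} / S_{0L}` holds, the sum running in integer
steps of `K`, i.e. steps of `2` in doubled labels, with `u(I,J) = min(I+J, k-I-J)`. -/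
theorem stmt_8 (k : ℕ) (hk : 0 < k)
    (S : ℕ → ℕ → ℝ)
    (hS : ∀ a b : ℕ,
      S a b = Real.sqrt (2 / (k + 2)) * Real.sin (Real.pi * (a + 1) * (b + 1) / (k + 2)))
    (a b l : ℕ) (ha : a ≤ k) (hb : b ≤ k) (hl : l ≤ k) :
    ∑ t ∈ Finset.range ((min (a + b) (2 * k - (a + b)) - (max a b - min a b)) / 2 + 1),
        S (max a b - min a b + 2 * t) l
      = S b l * S a l / S 0 l := by
  have hk2 : (0:ℝ) < (k:ℝ) + 2 := by positivity
  set θ : ℝ := Real.pi * ((l:ℝ) + 1) / ((k:ℝ) + 2) with hθ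
  have hθpos : 0 < θ := by
    apply div_pos _ hk2
    positivity
  have hθlt : θ < Real.pi := by
    rw [hθ, div_lt_iff₀ hk2]
    have hl2 : ((l:ℝ) + 1) < (k:ℝ) + 2 := by
      have : (l:ℝ) ≤ (k:ℝ) := by exact_mod_cast hl
      linarith
    nlinarith [Real.pi_pos]
  have hsin : 0 < Real.sin θ := Real.sin_pos_of_pos_of_lt_pi hθpos hθlt
  set c : ℝ := Real.sqrt (2 / ((k:ℝ) + 2)) with hc
  have hcpos : 0 < c := Real.sqrt_pos.mpr (by positivity)
  have hSθ : ∀ x : ℕ, S x l = c * Real.sin (((x:ℝ) + 1) * θ) := by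
    intro x
    rw [hS]
    push_cast
    congr 1
    rw [hθ]
    ring
  set d : ℕ := max a b - min a b with hd
  set n : ℕ := (min (a + b) (2 * k - (a + b)) - d) / 2 with hn
  have hun : min (a + b) (2 * k - (a + b)) = d + 2 * n := by omega
  -- rewrite the sum
  have hsum : ∑ t ∈ Finset.range (n + 1), S (d + 2 * t) l
      = c * ∑ t ∈ Finset.range (n + 1),
          Real.sin (((d:ℝ) + 2 * t + 1) * θ) := by
    rw [Finset.mul_sum]
    refine Finset.sum_congr rfl fun t _ => ?_
    rw [hSθ]
    push_cast
    ring_nf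
  -- key cosine identity
  have hmain : Real.cos ((d:ℝ) * θ) - Real.cos (((d:ℝ) + 2 * n + 2) * θ)
      = 2 * Real.sin (((a:ℝ) + 1) * θ) * Real.sin (((b:ℝ) + 1) * θ) := by
    have part1 : Real.cos ((d:ℝ) * θ) = Real.cos ((((a:ℝ) - b)) * θ) := by
      rcases le_total a b with h | h
      · have : (d:ℝ) = (b:ℝ) - a := by
          rw [hd]; push_cast [max_eq_right h, min_eq_left h, Nat.cast_sub h]; ring
        rw [this, ← Real.cos_neg (((a:ℝ) - b) * θ)]
        ring_nf
      · have : (d:ℝ) = (a:ℝ) - b := by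
          rw [hd]; push_cast [max_eq_left h, min_eq_right h, Nat.cast_sub h]; ring
        rw [this]
    have part2 : Real.cos (((d:ℝ) + 2 * n + 2) * θ)
        = Real.cos (((a:ℝ) + b + 2) * θ) := by
      have hdu : ((d:ℝ) + 2 * n) = ((min (a + b) (2 * k - (a + b)) : ℕ) : ℝ) := by
        rw [hun]; push_cast; ring
      rcases le_or_gt (a + b) (2 * k - (a + b)) with h | h
      · have : min (a + b) (2 * k - (a + b)) = a + b := min_eq_left h
        rw [hdu, this]; push_cast; ring_nf
      · have hmin : min (a + b) (2 * k - (a + b)) = 2 * k - (a + b) :=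
          min_eq_right (le_of_lt h)
        have hab : a + b ≤ 2 * k := by omega
        have hcast : ((min (a + b) (2 * k - (a + b)) : ℕ) : ℝ)
            = 2 * k - a - b := by
          rw [hmin]; push_cast [Nat.cast_sub hab]; ring
        rw [hdu, hcast]
        have harg : (2 * (k:ℝ) - a - b + 2) * θ
            = ((2 * (l + 1) : ℕ) : ℝ) * Real.pi - ((a:ℝ) + b + 2) * θ := by
          have h24 : (2 * (k:ℝ) + 4) * θ = ((2 * (l + 1) : ℕ) : ℝ) * Real.pi := by
            rw [hθ]; push_cast; field_simp; ring
          nlinarith [h24]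
        have hcos1 : Real.cos (((2 * (l + 1) : ℕ) : ℝ) * Real.pi) = 1 := by
          rw [show ((2 * (l + 1) : ℕ) : ℝ) * Real.pi
              = ((l + 1 : ℕ) : ℝ) * (2 * Real.pi) by push_cast; ring]
          exact Real.cos_nat_mul_two_pi (l + 1)
        have hsin1 : Real.sin (((2 * (l + 1) : ℕ) : ℝ) * Real.pi) = 0 :=
          Real.sin_nat_mul_pi (2 * (l + 1))
        rw [harg, Real.cos_sub, hcos1, hsin1]
        ring
    rw [part1, part2, Real.cos_sub_cos,
      show (((a:ℝ) - b) * θ + ((a:ℝ) + b + 2) * θ) / 2 = ((a:ℝ) + 1) * θ by ring,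
      show (((a:ℝ) - b) * θ - ((a:ℝ) + b + 2) * θ) / 2 = -(((b:ℝ) + 1) * θ) by ring,
      Real.sin_neg]
    ring
  -- assemble
  have htele := tele_aux θ (d:ℝ) n
  rw [hsum, hSθ a, hSθ b, hSθ 0]
  have hsum2 : ∑ t ∈ Finset.range (n + 1), Real.sin (((d:ℝ) + 2 * t + 1) * θ)
      = Real.sin (((a:ℝ) + 1) * θ) * Real.sin (((b:ℝ) + 1) * θ) / Real.sin θ := by
    have h2 : (2 * Real.sin θ) * ∑ t ∈ Finset.range (n + 1),
        Real.sin (((d:ℝ) + 2 * t + 1) * θ)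
        = 2 * Real.sin (((a:ℝ) + 1) * θ) * Real.sin (((b:ℝ) + 1) * θ) := by
      rw [Finset.mul_sum, htele]
      exact hmain
    field_simp at h2 ⊢
    rw [← h2]; congr 1; refine Finset.sum_congr rfl fun x _ => ?_; ring_nf
  rw [hsum2]
  push_cast
  field_simp
  ring_nf; rw [mul_assoc _ (Real.sin θ), mul_inv_cancel₀ hsin.ne', mul_one]
end

section
/- Let k be a positive integer and define coherent state coefficients ξ_{(X₀,Y₀)}(l) = (1/(k+2))^{1/4} e^{-iY₀X₀(k+2)/(2π)} Σ_{m'∈ℤ} e^{-i((k+2)/π) Y₀ (lπ/(k+2) − 2πm' − X₀)} e^{-((k+2)/(2π))(lπ/(k+2) − 2πm' − X₀)²} for l = 0, ..., 2k+3 and (X₀, Y₀) ∈ [0,2π)². Then the family of vectors ψ_{(X₀,Y₀)} = Σ_l ξ_{(X₀,Y₀)}(l) |l⟩ ∈ ℂ^{2k+4} satisfies the resolution of identity ((k+2)/(2π²)) ∫_{[0,2π)²} |ψ_{(X₀,Y₀)}⟩⟨ψ_{(X₀,Y₀)}| dX₀ dY₀ = Id. -/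
open Real MeasureTheory intervalIntegral Set

lemma aux_summable_gauss (c t : ℝ) (hc : 0 < c) :
    Summable fun m : ℤ => Real.exp (-(c * (t - 2 * π * m) ^ 2)) := by
  refine Summable.of_nonneg_of_le (fun n => (Real.exp_pos _).le) (fun n => ?_)
    ((summable_pow_mul_jacobiTheta₂_term_bound (2*c*|t|) (by positivity : (0:ℝ) < 4*π*c) 0).congr
      (fun n => by rw [pow_zero, one_mul]))
  rw [Real.exp_le_exp]
  have h1 : t * (n:ℝ) ≤ |t| * |(n:ℝ)| := by
    calc t * n ≤ |t * n| := le_abs_self _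
    _ = |t| * |(n:ℝ)| := abs_mul _ _
  have h2 : (0:ℝ) ≤ |(n:ℝ)| := abs_nonneg _
  have hπ := Real.pi_pos
  push_cast
  nlinarith [sq_nonneg t, sq_abs (n:ℝ), mul_pos hπ hc, sq_nonneg (t - 2*π*n)]

lemma aux_int_exp (n : ℤ) :
    ∫ Y in (0:ℝ)..(2*π), Complex.exp ((-Complex.I * n) * Y) = if n = 0 then (2*π:ℂ) else 0 := by
  rcases eq_or_ne n 0 with h | h
  · simp [h]
  · rw [if_neg h, integral_exp_mul_complex (by simp [Complex.ext_iff, h] : (-Complex.I * n : ℂ) ≠ 0)]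
    have h1 : (-Complex.I * n) * ((2*π:ℝ):ℂ) = (-n : ℤ) * (2 * π * Complex.I) := by
      push_cast; ring
    rw [h1, Complex.exp_int_mul_two_pi_mul_I]
    simp

lemma aux_hasSum_pieces (c b : ℝ) (hc : 0 < c) :
    HasSum (fun m : ℤ => ∫ X in (0:ℝ)..(2*π), Real.exp (-(c * (b - 2*π*m - X)^2)))
      (Real.sqrt (π / c)) := by
  set g : ℝ → ℝ := fun u => Real.exp (-(c * u ^ 2)) with hg
  have hgint : MeasureTheory.Integrable g := by
    have := integrable_exp_neg_mul_sq hc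
    simpa [hg, neg_mul] using this
  have H0 : HasSum (fun j : ℤ => ∫ u in Ioc (b + j • (2*π)) (b + (j+1) • (2*π)), g u)
      (Real.sqrt (π / c)) := by
    have hU : (⋃ j : ℤ, Ioc (b + j • (2*π)) (b + (j+1) • (2*π))) = univ :=
      iUnion_Ioc_add_zsmul (by positivity) b
    have hval : (∫ u, g u) = Real.sqrt (π / c) := by
      rw [← integral_gaussian c]
      congr 1; ext u; rw [hg, neg_mul]
    have H := MeasureTheory.hasSum_integral_iUnion (μ := volume)
      (s := fun j : ℤ => Ioc (b + j • (2*π)) (b + (j+1) • (2*π)))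
      (fun j => measurableSet_Ioc) (pairwise_disjoint_Ioc_add_zsmul b (2*π))
      (by rw [hU]; exact hgint.integrableOn)
    rwa [hU, setIntegral_univ, hval] at H
  have key : ∀ m : ℤ, (∫ X in (0:ℝ)..(2*π), Real.exp (-(c * (b - 2*π*m - X)^2)))
      = ∫ u in Ioc (b + (-m-1) • (2*π)) (b + ((-m-1)+1) • (2*π)), g u := by
    intro m
    have e1 : b + (-m-1) • (2*π) = (b - 2*π*m) - 2*π := by push_cast [zsmul_eq_mul]; ring
    have e2 : b + ((-m-1)+1) • (2*π) = (b - 2*π*m) - 0 := by push_cast [zsmul_eq_mul]; ring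
    rw [e1, e2, ← intervalIntegral.integral_of_le (by have := Real.pi_pos; linarith),
      ← intervalIntegral.integral_comp_sub_left g (b - 2*π*m)]
  have hfe : (fun m : ℤ => ∫ X in (0:ℝ)..(2*π), Real.exp (-(c * (b - 2*π*m - X)^2)))
      = (fun j : ℤ => ∫ u in Ioc (b + j • (2*π)) (b + (j+1) • (2*π)), g u) ∘
        (Function.Involutive.toPerm (fun m : ℤ => -m - 1) (fun m => by ring)) := by
    funext m
    exact key m
  rw [hfe]
  exact (Equiv.hasSum_iff _).mpr H0

lemma aux_tsum_diag {f : ℤ → ℂ} {F : ℤ × ℤ → ℂ}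
    (h : ∀ p : ℤ × ℤ, F p = if p.1 = p.2 then f p.1 else 0) :
    ∑' p : ℤ × ℤ, F p = ∑' m : ℤ, f m := by
  apply tsum_eq_tsum_of_ne_zero_bij (fun x => ((x : ℤ), (x : ℤ)))
  · intro x y hxy
    simpa [Subtype.ext_iff] using congrArg Prod.fst hxy
  · intro p hp
    rw [Function.mem_support, h p] at hp
    rcases eq_or_ne p.1 p.2 with h12 | h12
    · rw [if_pos h12] at hp
      exact ⟨⟨p.1, hp⟩, Prod.ext rfl h12⟩
    · simp [if_neg h12] at hp
  · intro x
    simp [h]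

/-- The coherent states `ψ_{(X₀,Y₀)} = Σ_l ξ_{(X₀,Y₀)}(l) |l⟩ ∈ ℂ^{2k+4}` built from
the coefficients
`ξ_{(X₀,Y₀)}(l) = (1/(k+2))^{1/4} e^{-iY₀X₀(k+2)/(2π)} Σ_{m'∈ℤ}
e^{-i((k+2)/π)Y₀(lπ/(k+2)−2πm'−X₀)} e^{-((k+2)/(2π))(lπ/(k+2)−2πm'−X₀)²}`
satisfy the resolution of identity
`((k+2)/(2π²)) ∫_{[0,2π)²} |ψ⟩⟨ψ| dX₀ dY₀ = Id`, stated entrywise. -/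
theorem stmt_13 (k : ℕ) (hk : 0 < k)
    (ξ : ℝ → ℝ → Fin (2 * k + 4) → ℂ)
    (hξ : ∀ X Y : ℝ, ∀ l : Fin (2 * k + 4),
      ξ X Y l = Complex.ofReal (((1 : ℝ) / (k + 2)) ^ ((1 : ℝ) / 4)) *
        Complex.exp (-(Complex.I * (Y : ℂ) * (X : ℂ) * ((k : ℂ) + 2)) / (2 * (Real.pi : ℂ))) *
        ∑' m : ℤ,
          Complex.exp (-(Complex.I * (((k : ℂ) + 2) / (Real.pi : ℂ)) * (Y : ℂ) *
              (((l : ℕ) : ℂ) * (Real.pi : ℂ) / ((k : ℂ) + 2) - 2 * (Real.pi : ℂ) * (m : ℂ) - (X : ℂ)))) *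
          Complex.exp (-((((k : ℂ) + 2) / (2 * (Real.pi : ℂ))) *
              (((l : ℕ) : ℂ) * (Real.pi : ℂ) / ((k : ℂ) + 2) - 2 * (Real.pi : ℂ) * (m : ℂ) - (X : ℂ)) ^ 2))) :
    ∀ l l' : Fin (2 * k + 4),
      (((k : ℂ) + 2) / (2 * (Real.pi : ℂ) ^ 2)) *
          ∫ X in (0 : ℝ)..(2 * Real.pi), ∫ Y in (0 : ℝ)..(2 * Real.pi),
            ξ X Y l * starRingEnd ℂ (ξ X Y l')
        = if l = l' then 1 else 0 := by
  intro l l'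
  have hπ := Real.pi_pos
  set N : ℝ := (k:ℝ) + 2 with hNdef
  have hN : 0 < N := by positivity
  set C : ℝ := ((1:ℝ) / ((k:ℝ) + 2)) ^ ((1:ℝ)/4) with hCdef
  set α : ℕ → ℤ → ℝ → ℝ := fun j m X => (j:ℝ)*π/N - 2*π*(m:ℝ) - X with hαdef
  set G : ℕ → ℤ → ℝ → ℝ := fun j m X => Real.exp (-(N/(2*π) * (α j m X)^2)) with hGdef
  set f : ℕ → ℝ → ℝ → ℤ → ℂ := fun j X Y m =>
      Complex.exp (-(Complex.I * ((N/π * Y * α j m X : ℝ) : ℂ))) * ((G j m X : ℝ) : ℂ) with hfdef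
  have hGpos : ∀ j m X, 0 < G j m X := fun j m X => Real.exp_pos _
  have hGsum : ∀ (j : ℕ) (X : ℝ), Summable fun m : ℤ => G j m X := by
    intro j X
    refine (aux_summable_gauss (N/(2*π)) ((j:ℝ)*π/N - X) (by positivity)).congr fun m => ?_
    rw [hGdef]
    congr 1
    rw [hαdef]
    ring
  have hfnorm : ∀ (j : ℕ) (X Y : ℝ) (m : ℤ), ‖f j X Y m‖ = G j m X := by
    intro j X Y m
    rw [hfdef]
    simp only [norm_mul, Complex.norm_exp, Complex.norm_real, Real.norm_eq_abs,
      abs_of_pos (hGpos j m X)]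
    have : (-(Complex.I * ((N/π * Y * α j m X : ℝ) : ℂ))).re = 0 := by simp
    rw [this, Real.exp_zero, one_mul]
  have hfsum : ∀ (j : ℕ) (X Y : ℝ), Summable fun m : ℤ => ‖f j X Y m‖ := by
    intro j X Y
    simp only [hfnorm]
    exact hGsum j X
  -- structured form of ξ
  have hxi : ∀ (X Y : ℝ) (j : Fin (2*k+4)),
      ξ X Y j = (C:ℂ) * Complex.exp (-(Complex.I * Y * X * ((k:ℂ)+2)) / (2*(π:ℂ))) *
        ∑' m : ℤ, f (j:ℕ) X Y m := by
    intro X Y j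
    rw [hξ X Y j]
    congr 1
    refine tsum_congr fun m => ?_
    have hα : (((j:ℕ):ℂ)*(π:ℂ)/((k:ℂ)+2) - 2*(π:ℂ)*(m:ℂ) - (X:ℂ)) = ((α (j:ℕ) m X : ℝ):ℂ) := by
      rw [hαdef]
      push_cast [hNdef]
      ring
    rw [hα, hfdef]
    congr 1
    · congr 1
      push_cast [hNdef]
      ring
    · rw [hGdef, Complex.ofReal_exp]
      congr 1
      push_cast [hNdef]
      ring

  set dI : ℤ × ℤ → ℤ := fun p => ((l:ℕ):ℤ) - ((l':ℕ):ℤ) - 2*((k:ℤ)+2)*(p.1 - p.2) with hdIdef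
  have hprod : ∀ X Y : ℝ, ξ X Y l * (starRingEnd ℂ) (ξ X Y l') =
      ((C:ℝ):ℂ)^2 * ∑' p : ℤ × ℤ,
        Complex.exp ((-Complex.I * ((dI p : ℤ):ℂ)) * (Y:ℂ)) *
          ((G (l:ℕ) p.1 X * G (l':ℕ) p.2 X : ℝ):ℂ) := by
    intro X Y
    have hP : Complex.exp (-(Complex.I * Y * X * ((k:ℂ)+2)) / (2*(π:ℂ))) *
        (starRingEnd ℂ) (Complex.exp (-(Complex.I * Y * X * ((k:ℂ)+2)) / (2*(π:ℂ)))) = 1 := by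
      rw [← Complex.exp_conj, ← Complex.exp_add]
      have : (starRingEnd ℂ) (-(Complex.I * Y * X * ((k:ℂ)+2)) / (2*(π:ℂ)))
          = (Complex.I * Y * X * ((k:ℂ)+2)) / (2*(π:ℂ)) := by
        simp only [map_div₀, map_neg, map_mul, map_add, map_natCast, map_ofNat, Complex.conj_I, Complex.conj_ofReal]
        ring
      rw [this, neg_div, neg_add_cancel, Complex.exp_zero]
    have hstarsum : (starRingEnd ℂ) (∑' m : ℤ, f (l':ℕ) X Y m) =
        ∑' m : ℤ, Complex.exp (Complex.I * ((N/π * Y * α (l':ℕ) m X : ℝ):ℂ)) *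
          ((G (l':ℕ) m X : ℝ):ℂ) := by
      rw [starRingEnd_apply, tsum_star]
      refine tsum_congr fun m => ?_
      rw [hfdef]
      simp only [star_mul']
      rw [← starRingEnd_apply, ← starRingEnd_apply, ← Complex.exp_conj, Complex.conj_ofReal]
      congr 1
      simp only [map_neg, map_mul, Complex.conj_I, Complex.conj_ofReal]
      ring
    have hstarnorm : Summable fun m : ℤ =>
        ‖Complex.exp (Complex.I * ((N/π * Y * α (l':ℕ) m X : ℝ):ℂ)) * ((G (l':ℕ) m X : ℝ):ℂ)‖ := by
      refine (hGsum (l':ℕ) X).congr fun m => ?_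
      symm
      simp only [norm_mul, Complex.norm_exp, Complex.norm_real, Real.norm_eq_abs,
        abs_of_pos (hGpos (l':ℕ) m X)]
      have : (Complex.I * ((N/π * Y * α (l':ℕ) m X : ℝ):ℂ)).re = 0 := by simp
      rw [this, Real.exp_zero, one_mul]
    rw [hxi X Y l, hxi X Y l', map_mul, map_mul, Complex.conj_ofReal, hstarsum]
    rw [show ∀ a p q s t : ℂ, (a*p*s) * ((a*q)*t) = a^2 * (p*q) * (s*t) from
      fun a p q s t => by ring]
    rw [hP, mul_one]
    rw [tsum_mul_tsum_of_summable_norm (hfsum (l:ℕ) X Y) hstarnorm]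
    congr 1
    refine tsum_congr fun p => ?_
    rw [hfdef]
    have hr : (N/π * Y * α (l:ℕ) p.1 X : ℝ) - (N/π * Y * α (l':ℕ) p.2 X : ℝ)
        = ((dI p : ℤ):ℝ) * Y := by
      rw [hαdef, hdIdef]
      push_cast [hNdef]
      field_simp
      ring
    have hexp : Complex.exp (-(Complex.I * ((N/π * Y * α (l:ℕ) p.1 X : ℝ):ℂ))) *
        Complex.exp (Complex.I * ((N/π * Y * α (l':ℕ) p.2 X : ℝ):ℂ))
        = Complex.exp ((-Complex.I * ((dI p : ℤ):ℂ)) * (Y:ℂ)) := by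
      rw [← Complex.exp_add]
      congr 1
      have : ((N/π * Y * α (l:ℕ) p.1 X : ℝ):ℂ) - ((N/π * Y * α (l':ℕ) p.2 X : ℝ):ℂ)
          = ((dI p : ℤ):ℂ) * (Y:ℂ) := by
        rw [← Complex.ofReal_sub, hr]
        push_cast
        ring
      calc -(Complex.I * ((N/π * Y * α (l:ℕ) p.1 X : ℝ):ℂ))
            + Complex.I * ((N/π * Y * α (l':ℕ) p.2 X : ℝ):ℂ)
          = -Complex.I * (((N/π * Y * α (l:ℕ) p.1 X : ℝ):ℂ)
            - ((N/π * Y * α (l':ℕ) p.2 X : ℝ):ℂ)) := by ring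
        _ = -Complex.I * (((dI p : ℤ):ℂ) * (Y:ℂ)) := by rw [this]
        _ = (-Complex.I * ((dI p : ℤ):ℂ)) * (Y:ℂ) := by ring
    calc Complex.exp (-(Complex.I * ((N/π * Y * α (l:ℕ) p.1 X : ℝ):ℂ))) * ((G (l:ℕ) p.1 X : ℝ):ℂ)
          * (Complex.exp (Complex.I * ((N/π * Y * α (l':ℕ) p.2 X : ℝ):ℂ)) * ((G (l':ℕ) p.2 X : ℝ):ℂ))
        = (Complex.exp (-(Complex.I * ((N/π * Y * α (l:ℕ) p.1 X : ℝ):ℂ))) *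
            Complex.exp (Complex.I * ((N/π * Y * α (l':ℕ) p.2 X : ℝ):ℂ)))
          * (((G (l:ℕ) p.1 X : ℝ):ℂ) * ((G (l':ℕ) p.2 X : ℝ):ℂ)) := by ring
      _ = Complex.exp ((-Complex.I * ((dI p : ℤ):ℂ)) * (Y:ℂ)) *
            ((G (l:ℕ) p.1 X * G (l':ℕ) p.2 X : ℝ):ℂ) := by
          rw [hexp, Complex.ofReal_mul]

  have hIoc : ∀ c : ℂ, ∀ GG : ℝ, Integrable
      (fun Y : ℝ => Complex.exp (c * (Y:ℂ)) * ((GG:ℝ):ℂ)) (volume.restrict (Ioc (0:ℝ) (2*π))) := by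
    intro c GG
    exact ((Complex.continuous_exp.comp (continuous_const.mul Complex.continuous_ofReal)).mul
      continuous_const).integrableOn_Ioc
  have hYint : ∀ X : ℝ, (∫ Y in (0:ℝ)..(2*π), ξ X Y l * (starRingEnd ℂ) (ξ X Y l'))
      = ((C:ℝ):ℂ)^2 * ∑' p : ℤ × ℤ, (if dI p = 0 then (2*(π:ℂ)) else 0) *
          ((G (l:ℕ) p.1 X * G (l':ℕ) p.2 X : ℝ):ℂ) := by
    intro X
    simp only [hprod]
    rw [intervalIntegral.integral_const_mul]
    congr 1
    have hSum : Summable fun p : ℤ × ℤ => ∫ Y in Ioc (0:ℝ) (2*π),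
        ‖Complex.exp ((-Complex.I * ((dI p : ℤ):ℂ)) * (Y:ℂ)) *
          ((G (l:ℕ) p.1 X * G (l':ℕ) p.2 X : ℝ):ℂ)‖ := by
      have heval : ∀ p : ℤ × ℤ, (∫ Y in Ioc (0:ℝ) (2*π),
          ‖Complex.exp ((-Complex.I * ((dI p : ℤ):ℂ)) * (Y:ℂ)) *
            ((G (l:ℕ) p.1 X * G (l':ℕ) p.2 X : ℝ):ℂ)‖)
          = (2*π) * (G (l:ℕ) p.1 X * G (l':ℕ) p.2 X) := by
        intro p
        have h1 : (fun Y : ℝ => ‖Complex.exp ((-Complex.I * ((dI p : ℤ):ℂ)) * (Y:ℂ)) *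
            ((G (l:ℕ) p.1 X * G (l':ℕ) p.2 X : ℝ):ℂ)‖)
            = fun _ => G (l:ℕ) p.1 X * G (l':ℕ) p.2 X := by
          funext Y
          simp only [norm_mul, Complex.norm_exp, Complex.norm_real, Real.norm_eq_abs]
          have hre : (((-Complex.I * ((dI p : ℤ):ℂ)) * (Y:ℂ)).re) = 0 := by
            simp [Complex.mul_re]
          rw [hre, Real.exp_zero, one_mul, ← abs_mul,
            abs_of_pos (mul_pos (hGpos (l:ℕ) p.1 X) (hGpos (l':ℕ) p.2 X))]
        rw [h1, MeasureTheory.setIntegral_const, Real.volume_real_Ioc, smul_eq_mul]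
        rw [max_eq_left (by linarith)]
        ring
      simp only [heval]
      exact (((hGsum (l:ℕ) X).mul_of_nonneg (hGsum (l':ℕ) X)
        (fun m => (hGpos _ _ _).le) (fun m => (hGpos _ _ _).le)).mul_left (2*π))
    rw [intervalIntegral.integral_of_le (by linarith),
      ← MeasureTheory.integral_tsum_of_summable_integral_norm (fun p => hIoc _ _) hSum]
    refine tsum_congr fun p => ?_
    rw [← intervalIntegral.integral_of_le (by linarith : (0:ℝ) ≤ 2*π),
      intervalIntegral.integral_mul_const, aux_int_exp]

  have hl1 : ((l:ℕ):ℤ) < 2*(k:ℤ)+4 := by exact_mod_cast l.isLt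
  have hl2 : ((l':ℕ):ℤ) < 2*(k:ℤ)+4 := by exact_mod_cast l'.isLt
  have hl01 : (0:ℤ) ≤ ((l:ℕ):ℤ) := Int.natCast_nonneg _
  have hl02 : (0:ℤ) ≤ ((l':ℕ):ℤ) := Int.natCast_nonneg _
  have hdz : ∀ p : ℤ × ℤ, dI p = 0 → ((l:ℕ):ℤ) = ((l':ℕ):ℤ) ∧ p.1 = p.2 := by
    intro p h0
    rw [hdIdef] at h0
    simp only at h0
    rcases lt_trichotomy (p.1 - p.2) 0 with hq1 | hq1 | hq1
    · exfalso
      have h2 : p.1 - p.2 ≤ -1 := by omega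
      have h3 : 2*((k:ℤ)+2)*(p.1 - p.2) ≤ 2*((k:ℤ)+2)*(-1) :=
        mul_le_mul_of_nonneg_left h2 (by positivity)
      linarith
    · have h4 : 2*((k:ℤ)+2)*(p.1 - p.2) = 0 := by rw [hq1]; ring
      constructor
      · linarith
      · omega
    · exfalso
      have h2 : (1:ℤ) ≤ p.1 - p.2 := by omega
      have h3 : 2*((k:ℤ)+2)*1 ≤ 2*((k:ℤ)+2)*(p.1 - p.2) :=
        mul_le_mul_of_nonneg_left h2 (by positivity)
      linarith
  rcases eq_or_ne l l' with rfl | hll'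
  · rw [if_pos rfl]
    have hGG : ∀ (m : ℤ) (X : ℝ), G (l:ℕ) m X * G (l:ℕ) m X
        = Real.exp (-(N/π * (α (l:ℕ) m X)^2)) := by
      intro m X
      rw [hGdef]
      simp only
      rw [← Real.exp_add]
      congr 1
      field_simp
      ring
    have hY2 : ∀ X : ℝ, (∫ Y in (0:ℝ)..(2*π), ξ X Y l * (starRingEnd ℂ) (ξ X Y l))
        = (((C^2 * (2*π)) : ℝ):ℂ) *
          ∑' m : ℤ, ((Real.exp (-(N/π * (α (l:ℕ) m X)^2)) : ℝ):ℂ) := by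
      intro X
      rw [hYint X]
      rw [aux_tsum_diag (f := fun m => (2*(π:ℂ)) * ((G (l:ℕ) m X * G (l:ℕ) m X : ℝ):ℂ))
        (fun p => ?_)]
      · simp only [hGG]
        rw [tsum_mul_left]
        push_cast
        ring
      · rcases eq_or_ne p.1 p.2 with h | h
        · rw [if_pos h, if_pos (by rw [hdIdef]; simp [h]), ← h]
        · rw [if_neg h, if_neg (fun h0 => h (hdz p h0).2), zero_mul]
    simp only [hY2]
    rw [intervalIntegral.integral_const_mul]
    have HS := aux_hasSum_pieces (N/π) (((l:ℕ):ℝ)*π/N) (by positivity)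
    have HS' : HasSum (fun m : ℤ => ∫ X in (0:ℝ)..(2*π),
        Real.exp (-(N/π * (α (l:ℕ) m X)^2))) (Real.sqrt (π/(N/π))) := by
      have he : (fun m : ℤ => ∫ X in (0:ℝ)..(2*π), Real.exp (-(N/π * (α (l:ℕ) m X)^2)))
          = (fun m : ℤ => ∫ X in (0:ℝ)..(2*π),
            Real.exp (-(N/π * ((((l:ℕ):ℝ))*π/N - 2*π*(m:ℝ) - X)^2))) := by
        simp only [hαdef]
      rw [he]
      exact HS
    have hInt2 : ∀ m : ℤ, Integrable
        (fun X : ℝ => ((Real.exp (-(N/π * (α (l:ℕ) m X)^2)) : ℝ):ℂ))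
        (volume.restrict (Ioc (0:ℝ) (2*π))) := by
      intro m
      refine Continuous.integrableOn_Ioc ?_
      simp only [hαdef]
      fun_prop
    have hSum2 : Summable fun m : ℤ => ∫ X in Ioc (0:ℝ) (2*π),
        ‖((Real.exp (-(N/π * (α (l:ℕ) m X)^2)) : ℝ):ℂ)‖ := by
      have hn : ∀ (m : ℤ) (X : ℝ), ‖((Real.exp (-(N/π * (α (l:ℕ) m X)^2)) : ℝ):ℂ)‖
          = Real.exp (-(N/π * (α (l:ℕ) m X)^2)) := by
        intro m X
        rw [Complex.norm_real, Real.norm_eq_abs, abs_of_pos (Real.exp_pos _)]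
      simp only [hn]
      refine HS'.summable.congr fun m => ?_
      rw [intervalIntegral.integral_of_le (by linarith)]
    have hswap : (∫ X in (0:ℝ)..(2*π), ∑' m : ℤ,
        ((Real.exp (-(N/π * (α (l:ℕ) m X)^2)) : ℝ):ℂ))
        = ((Real.sqrt (π/(N/π)) : ℝ):ℂ) := by
      rw [intervalIntegral.integral_of_le (by linarith),
        ← MeasureTheory.integral_tsum_of_summable_integral_norm hInt2 hSum2]
      have hterm : ∀ m : ℤ, (∫ X in Ioc (0:ℝ) (2*π),
          ((Real.exp (-(N/π * (α (l:ℕ) m X)^2)) : ℝ):ℂ))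
          = ((∫ X in (0:ℝ)..(2*π), Real.exp (-(N/π * (α (l:ℕ) m X)^2)) : ℝ):ℂ) := by
        intro m
        rw [← intervalIntegral.integral_of_le (by linarith : (0:ℝ) ≤ 2*π)]
        exact (intervalIntegral.integral_ofReal)
      simp only [hterm]
      rw [← Complex.ofReal_tsum, HS'.tsum_eq]
    rw [hswap]
    -- final arithmetic
    have h2 : Real.sqrt N ≠ 0 := ne_of_gt (Real.sqrt_pos.mpr hN)
    have h1 : Real.sqrt N * Real.sqrt N = N := Real.mul_self_sqrt hN.le
    have hsq : Real.sqrt (π/(N/π)) = π / Real.sqrt N := by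
      rw [show π/(N/π) = π^2/N from by field_simp]
      rw [Real.sqrt_div (sq_nonneg π), Real.sqrt_sq hπ.le]
    have hC2 : C^2 = 1/Real.sqrt N := by
      rw [hCdef, ← hNdef]
      rw [← Real.rpow_natCast ((1/N) ^ ((1:ℝ)/4)) 2, ← Real.rpow_mul (by positivity)]
      rw [show ((1:ℝ)/4 * ((2:ℕ):ℝ)) = ((1:ℝ)/2) from by norm_num]
      rw [← Real.sqrt_eq_rpow, one_div, Real.sqrt_inv, ← one_div]
    have hfin : N/(2*π^2) * ((C^2 * (2*π)) * (π / Real.sqrt N)) = 1 := by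
      rw [hC2]
      field_simp
      nlinarith [h1]
    have hNc : ((k:ℂ)+2) = ((N:ℝ):ℂ) := by rw [hNdef]; push_cast; ring
    calc ((k:ℂ)+2) / (2*(π:ℂ)^2) * ((((C^2 * (2*π)) : ℝ):ℂ) * ((Real.sqrt (π/(N/π)) : ℝ):ℂ))
        = ((N/(2*π^2) * ((C^2 * (2*π)) * (π / Real.sqrt N)) : ℝ):ℂ) := by
          rw [hNc, hsq]; push_cast; ring
      _ = 1 := by rw [hfin]; norm_num
  · rw [if_neg hll']
    have hvne : ((l:ℕ):ℤ) ≠ ((l':ℕ):ℤ) := by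
      intro h
      exact hll' (Fin.ext (by exact_mod_cast h))
    have hz : ∀ X : ℝ, (∫ Y in (0:ℝ)..(2*π), ξ X Y l * (starRingEnd ℂ) (ξ X Y l')) = 0 := by
      intro X
      rw [hYint X]
      rw [tsum_congr (fun p : ℤ × ℤ =>
        by rw [if_neg (fun h => hvne (hdz p h).1), zero_mul] :
        ∀ p : ℤ × ℤ, (if dI p = 0 then (2*(π:ℂ)) else 0) *
          ((G (l:ℕ) p.1 X * G (l':ℕ) p.2 X : ℝ):ℂ) = (fun _ => (0:ℂ)) p)]
      rw [tsum_zero, mul_zero]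
    simp only [hz]
    simp
end
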